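/- Let r > 0, T = log(r+1), b(t) = (r+1)e^{-t} - 1, n a positive natural number, and K a real constant. The solution u⁻ of ∂_t u⁻ + u⁻ = n·log(b(t)/r) + K with u⁻(0) = 0, given by u⁻(t) = e^{-t} ∫₀^t e^s (n·log(b(s)/r) + K) ds, is bounded on [0, T). -/

import Mathlib

open Real in
/-- Bound on `x log x` for `0 < x ≤ r`. -/
lemma xlogx_bound (r : ℝ) (hr : 0 < r) (x : ℝ) (hx : 0 < x) (hxr : x ≤ r) :
    |x * Real.log x| ≤ 1 + r * |Real.log r| := by
  have hrl : 0 ≤ r * |Real.log r| := by positivity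
  rcases le_or_gt x 1 with h1 | h1
  · have := Real.abs_log_mul_self_lt x hx h1
    rw [mul_comm] at this
    linarith [this.le]
  · have hlx : 0 < Real.log x := Real.log_pos h1
    have hlr : Real.log x ≤ Real.log r := Real.log_le_log hx hxr
    have habs : |x * Real.log x| = x * Real.log x := abs_of_pos (by positivity)
    have h3 : Real.log r ≤ |Real.log r| := le_abs_self _
    rw [habs]
    nlinarith

/-- With `r > 0`, `T = log(r+1)`, `b(t) = (r+1)e^{-t} - 1`, `n ≥ 1`, `K ∈ ℝ`,
the solution `u⁻(t) = e^{-t} ∫₀^t e^s (n log(b(s)/r) + K) ds` of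
`∂_t u⁻ + u⁻ = n log(b(t)/r) + K`, `u⁻(0) = 0` is bounded on `[0,T)`. -/
theorem stmt5 (r : ℝ) (hr : 0 < r) (n : ℕ) (hn : 0 < n) (K : ℝ) (u : ℝ → ℝ)
    (hu : ∀ t, u t = Real.exp (-t) *
      ∫ s in (0:ℝ)..t,
        Real.exp s * (n * Real.log (((r + 1) * Real.exp (-s) - 1) / r) + K)) :
    ∃ C : ℝ, ∀ t ∈ Set.Ico (0:ℝ) (Real.log (r + 1)), |u t| ≤ C := by
  have hr1 : (0:ℝ) < r + 1 := by linarith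
  set b : ℝ → ℝ := fun s => (r + 1) * Real.exp (-s) - 1 with hbdef
  set F : ℝ → ℝ := fun s => n * ((Real.exp s - (r + 1)) * Real.log (b s))
      - n * (r + 1) * s - (n * Real.log r) * Real.exp s + K * Real.exp s with hFdef
  set A : ℝ := n * ((r + 1) * (1 + r * |Real.log r|)) + n * (r + 1) * Real.log (r + 1)
      + n * |Real.log r| * (r + 1) + |K| * (r + 1) with hAdef
  refine ⟨A + |F 0|, ?_⟩
  rintro t ⟨ht0, htT⟩
  -- positivity of b below T
  have hbpos : ∀ s, s < Real.log (r + 1) → 0 < b s := by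
    intro s hs
    have h1 : Real.exp (-Real.log (r + 1)) < Real.exp (-s) :=
      Real.exp_lt_exp.mpr (by linarith)
    rw [Real.exp_neg, Real.exp_log hr1] at h1
    have h2 : (r + 1) * (r + 1)⁻¹ < (r + 1) * Real.exp (-s) :=
      (mul_lt_mul_iff_right₀ hr1).mpr h1
    rw [mul_inv_cancel₀ (ne_of_gt hr1)] at h2
    simp only [hbdef]
    linarith
  -- derivative of F
  have hderiv : ∀ s ∈ Set.uIcc (0:ℝ) t, HasDerivAt F
      (Real.exp s * ((n : ℝ) * Real.log (b s / r) + K)) s := by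
    intro s hs
    rw [Set.uIcc_of_le ht0] at hs
    have hbs : 0 < b s := hbpos s (lt_of_le_of_lt hs.2 htT)
    have hexp : HasDerivAt Real.exp (Real.exp s) s := Real.hasDerivAt_exp s
    have hb' : HasDerivAt b (-((r + 1) * Real.exp (-s))) s := by
      have h0 : HasDerivAt (fun x : ℝ => -x) (-1) s := (hasDerivAt_id s).neg
      have h1 : HasDerivAt (fun x : ℝ => Real.exp (-x)) (Real.exp (-s) * (-1)) s :=
        (Real.hasDerivAt_exp (-s)).comp s h0
      have h2 : HasDerivAt (fun x : ℝ => (r + 1) * Real.exp (-x) - 1)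
          ((r + 1) * (Real.exp (-s) * (-1))) s := (h1.const_mul (r + 1)).sub_const 1
      convert h2 using 1
      ring
    have hlog : HasDerivAt (fun x => Real.log (b x))
        (-((r + 1) * Real.exp (-s)) / b s) s := hb'.log (ne_of_gt hbs)
    have hmul : HasDerivAt (fun x => (Real.exp x - (r + 1)) * Real.log (b x))
        (Real.exp s * Real.log (b s)
          + (Real.exp s - (r + 1)) * (-((r + 1) * Real.exp (-s)) / b s)) s :=
      (hexp.sub_const (r + 1)).mul hlog
    have hF' : HasDerivAt F
        ((n : ℝ) * (Real.exp s * Real.log (b s)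
            + (Real.exp s - (r + 1)) * (-((r + 1) * Real.exp (-s)) / b s))
          - n * (r + 1) * 1 - (n * Real.log r) * Real.exp s + K * Real.exp s) s := by
      exact (((hmul.const_mul (n : ℝ)).sub
        ((hasDerivAt_id s).const_mul ((n : ℝ) * (r + 1)))).sub
        (hexp.const_mul ((n : ℝ) * Real.log r))).add (hexp.const_mul K)
    convert hF' using 1
    have hexps : Real.exp s * Real.exp (-s) = 1 := by
      rw [← Real.exp_add]; simp
    have hkey : (Real.exp s - (r + 1)) * (-((r + 1) * Real.exp (-s)) / b s) = r + 1 := by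
      have hb1 : (Real.exp s - (r + 1)) * (-((r + 1) * Real.exp (-s))) = (r + 1) * b s := by
        simp only [hbdef]; nlinarith [hexps]
      rw [mul_div_assoc'] at *
      rw [hb1, mul_div_assoc, div_self (ne_of_gt hbs), mul_one]
    rw [Real.log_div (ne_of_gt hbs) (ne_of_gt hr), hkey]
    ring
  -- integrability of the integrand
  have hint : IntervalIntegrable
      (fun s => Real.exp s * ((n : ℝ) * Real.log (b s / r) + K))
      MeasureTheory.volume 0 t := by
    apply ContinuousOn.intervalIntegrable
    have hbc : Continuous b := by
      simp only [hbdef]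
      exact (continuous_const.mul (Real.continuous_exp.comp continuous_neg)).sub
        continuous_const
    have hlogc : ContinuousOn (fun s => Real.log (b s / r)) (Set.uIcc 0 t) := by
      apply ContinuousOn.log
      · exact (hbc.div_const r).continuousOn
      · intro s hs
        rw [Set.uIcc_of_le ht0] at hs
        have hbs : 0 < b s := hbpos s (lt_of_le_of_lt hs.2 htT)
        positivity
    exact Real.continuous_exp.continuousOn.mul
      (((continuousOn_const).mul hlogc).add continuousOn_const)
  have hFTC := intervalIntegral.integral_eq_sub_of_hasDerivAt hderiv hint
  -- rewrite u t
  have hut : u t = Real.exp (-t) * (F t - F 0) := by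
    rw [hu t, ← hFTC]
  -- bounds
  have hexpt1 : Real.exp (-t) ≤ 1 := Real.exp_le_one_iff.mpr (by linarith)
  have hexptr : Real.exp t ≤ r + 1 := by
    calc Real.exp t ≤ Real.exp (Real.log (r + 1)) := Real.exp_le_exp.mpr htT.le
    _ = r + 1 := Real.exp_log hr1
  have hbt : 0 < b t := hbpos t htT
  have hbtr : b t ≤ r := by
    have : Real.exp (-t) ≤ 1 := hexpt1
    simp only [hbdef]
    nlinarith
  have hexps : Real.exp t * Real.exp (-t) = 1 := by
    rw [← Real.exp_add]; simp
  -- the singular term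
  have hsing : |(Real.exp t - (r + 1)) * Real.log (b t)|
      ≤ (r + 1) * (1 + r * |Real.log r|) := by
    have heq : Real.exp t - (r + 1) = -(Real.exp t * b t) := by
      simp only [hbdef]; nlinarith
    rw [heq]
    have : |-(Real.exp t * b t) * Real.log (b t)|
        = Real.exp t * |b t * Real.log (b t)| := by
      rw [neg_mul, abs_neg, mul_assoc, abs_mul, abs_of_pos (Real.exp_pos t)]
    rw [this]
    have hx := xlogx_bound r hr (b t) hbt hbtr
    have h1 : 0 ≤ |b t * Real.log (b t)| := abs_nonneg _
    have h2 : 0 < Real.exp t := Real.exp_pos t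
    nlinarith
  have hFt : |F t| ≤ A := by
    have htle : t ≤ Real.log (r + 1) := htT.le
    have hn1 : (1:ℝ) ≤ (n:ℝ) := by exact_mod_cast hn
    have h1 : |(n : ℝ) * ((Real.exp t - (r + 1)) * Real.log (b t))|
        ≤ n * ((r + 1) * (1 + r * |Real.log r|)) := by
      rw [abs_mul, Nat.abs_cast]
      exact mul_le_mul_of_nonneg_left hsing (by positivity)
    have h2 : |(n : ℝ) * (r + 1) * t| ≤ n * (r + 1) * Real.log (r + 1) := by
      rw [abs_mul, abs_of_nonneg (by positivity : (0:ℝ) ≤ (n:ℝ) * (r+1)),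
        abs_of_nonneg ht0]
      exact mul_le_mul_of_nonneg_left htle (by positivity)
    have h3 : |((n : ℝ) * Real.log r) * Real.exp t| ≤ n * |Real.log r| * (r + 1) := by
      rw [abs_mul, abs_mul, Nat.abs_cast, abs_of_pos (Real.exp_pos t)]
      exact mul_le_mul_of_nonneg_left hexptr (by positivity)
    have h4 : |K * Real.exp t| ≤ |K| * (r + 1) := by
      rw [abs_mul, abs_of_pos (Real.exp_pos t)]
      exact mul_le_mul_of_nonneg_left hexptr (abs_nonneg K)
    simp only [hFdef, hAdef]
    calc |(n : ℝ) * ((Real.exp t - (r + 1)) * Real.log (b t))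
          - n * (r + 1) * t - (n * Real.log r) * Real.exp t + K * Real.exp t|
        ≤ |(n : ℝ) * ((Real.exp t - (r + 1)) * Real.log (b t))|
          + |(n : ℝ) * (r + 1) * t| + |((n : ℝ) * Real.log r) * Real.exp t|
          + |K * Real.exp t| := by
          calc _ ≤ |(n : ℝ) * ((Real.exp t - (r + 1)) * Real.log (b t))
              - n * (r + 1) * t - (n * Real.log r) * Real.exp t| + |K * Real.exp t| :=
                abs_add_le _ _
          _ ≤ |(n : ℝ) * ((Real.exp t - (r + 1)) * Real.log (b t))
              - n * (r + 1) * t| + |((n : ℝ) * Real.log r) * Real.exp t|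
              + |K * Real.exp t| := by
                have := abs_sub (((n : ℝ) * ((Real.exp t - (r + 1)) * Real.log (b t))
                  - n * (r + 1) * t)) (((n : ℝ) * Real.log r) * Real.exp t)
                linarith
          _ ≤ _ := by
                have := abs_sub ((n : ℝ) * ((Real.exp t - (r + 1)) * Real.log (b t)))
                  ((n : ℝ) * (r + 1) * t)
                linarith
      _ ≤ _ := by linarith
  calc |u t| = |Real.exp (-t)| * |F t - F 0| := by rw [hut, abs_mul]
    _ ≤ 1 * (|F t| + |F 0|) := by
        apply mul_le_mul
        · rw [abs_of_pos (Real.exp_pos _)]; exact hexpt1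
        · exact abs_sub _ _
        · exact abs_nonneg _
        · norm_num
    _ ≤ A + |F 0| := by rw [one_mul]; linarith
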